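/- Let α, β, γ, λ, μ be real numbers and let N(α,β,γ,λ,μ) be the 3×3 real matrix whose rows are (α,β,γ), (λα,λβ,λγ), (μα,μβ,μγ). Suppose α = 0 and β ≠ 0. Then: (i) if λ = 0 and μ = 0, the evolution algebra E_{N(α,β,γ,λ,μ)} is isomorphic to E₁₀ (structure matrix with rows (0,0,0), (0,0,0), (1,0,0)); (ii) if λ = 0, γ = 0 and μ > 0, it is isomorphic to E₁₁ (rows (0,0,0), (1,0,0), (1,0,0)); (iii) if λ = 0, γ = 0 and μ < 0, it is isomorphic to E₁₂ (rows (0,0,0), (1,0,0), (−1,0,0)). -/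

import Mathlib

/-- Evolution algebra multiplication on ℝ³ determined by a structure matrix `A`:
`(x ∗_A y) j = ∑ i, x i * y i * A i j`. -/
def evolMul (A : Matrix (Fin 3) (Fin 3) ℝ) (x y : Fin 3 → ℝ) : Fin 3 → ℝ :=
  fun j => ∑ i, x i * y i * A i j

/-- The evolution algebras with structure matrices `A` and `B` are isomorphic:
there is an ℝ-linear equivalence of ℝ³ intertwining the two multiplications. -/
def EvolIso (A B : Matrix (Fin 3) (Fin 3) ℝ) : Prop :=
  ∃ f : (Fin 3 → ℝ) ≃ₗ[ℝ] (Fin 3 → ℝ),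
    ∀ x y, f (evolMul A x y) = evolMul B (f x) (f y)

/-!
If the rows `u₀, u₁, u₂` of an invertible matrix `P` satisfy `uᵢ uⱼ = 0` for `i ≠ j` and
`uᵢ uᵢ = ∑ₖ B i k uₖ` in `E_A`, then `x ↦ x ᵥ* P` is an isomorphism `E_B ≃ E_A`. With `α = 0`
the square of `e₀` is `u₀ = β e₁ + γ e₂`, which squares to zero, and the required natural bases are
`(u₀, e₂, e₀)` in case (i) and `(β e₁, e₀, e₂ / √|μ|)` in cases (ii) and (iii).
-/

open Matrix

def evolMulBilin (A : Matrix (Fin 3) (Fin 3) ℝ) :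
    (Fin 3 → ℝ) →ₗ[ℝ] (Fin 3 → ℝ) →ₗ[ℝ] (Fin 3 → ℝ) :=
  LinearMap.mk₂ ℝ (evolMul A)
    (fun x x' y => by ext j; simp [evolMul, add_mul, Finset.sum_add_distrib])
    (fun r x y => by ext j; simp [evolMul, Finset.mul_sum, mul_assoc])
    (fun x y y' => by ext j; simp [evolMul, mul_add, add_mul, Finset.sum_add_distrib])
    (fun r x y => by
      ext j
      simp only [evolMul, Pi.smul_apply, smul_eq_mul, Finset.mul_sum]
      exact Finset.sum_congr rfl fun _ _ => by ring)

@[simp]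
theorem evolMulBilin_apply (A : Matrix (Fin 3) (Fin 3) ℝ) (x y : Fin 3 → ℝ) :
    evolMulBilin A x y = evolMul A x y :=
  rfl

theorem evolMul_single_single (B : Matrix (Fin 3) (Fin 3) ℝ) (i j : Fin 3) :
    evolMul B (Pi.single i 1) (Pi.single j 1) = if i = j then B i else 0 := by
  ext k
  split_ifs with h
  · subst h
    simp [evolMul, Pi.single_apply]
  · simp [evolMul, Pi.single_apply, Ne.symm h]

noncomputable def vecMulEquiv (P : Matrix (Fin 3) (Fin 3) ℝ) (hP : IsUnit P.det) :
    (Fin 3 → ℝ) ≃ₗ[ℝ] (Fin 3 → ℝ) :=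
  LinearEquiv.ofLinearMap (vecMulLinear P) (vecMulLinear P⁻¹)
    (LinearMap.ext fun x => by simp [vecMul_vecMul, nonsing_inv_mul P hP])
    (LinearMap.ext fun x => by simp [vecMul_vecMul, mul_nonsing_inv P hP])

@[simp]
theorem vecMulEquiv_apply (P : Matrix (Fin 3) (Fin 3) ℝ) (hP : IsUnit P.det) (x : Fin 3 → ℝ) :
    vecMulEquiv P hP x = x ᵥ* P :=
  rfl

theorem evolIso_of_natural_basis {A B P : Matrix (Fin 3) (Fin 3) ℝ} (hP : IsUnit P.det)
    (hmul : ∀ i j, evolMul A (P i) (P j) = if i = j then B i ᵥ* P else 0) :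
    EvolIso A B := by
  let g := vecMulEquiv P hP
  have hg : ∀ x y, g (evolMul B x y) = evolMul A (g x) (g y) := by
    suffices (evolMulBilin B).compr₂ (g : (Fin 3 → ℝ) →ₗ[ℝ] (Fin 3 → ℝ)) =
        ((evolMulBilin A).compl₁₂ g g) from fun x y => LinearMap.congr_fun₂ this x y
    refine LinearMap.ext_basis (Pi.basisFun ℝ (Fin 3)) (Pi.basisFun ℝ (Fin 3)) fun i j => ?_
    simp only [LinearMap.compr₂_apply, LinearMap.compl₁₂_apply, Pi.basisFun_apply,
      evolMulBilin_apply, LinearEquiv.coe_coe]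
    rw [vecMulEquiv_apply, vecMulEquiv_apply, vecMulEquiv_apply, evolMul_single_single,
      single_one_vecMul, single_one_vecMul]
    change _ = evolMul A (P i) (P j)
    rw [hmul]
    split_ifs <;> simp
  refine ⟨g.symm, fun x y => ?_⟩
  obtain ⟨x, rfl⟩ := g.surjective x
  obtain ⟨y, rfl⟩ := g.surjective y
  rw [← hg]
  simp

theorem evolIso_single_nonzero_row (b c : ℝ) (hb : b ≠ 0) :
    EvolIso !![0, b, c; 0, 0, 0; 0, 0, 0] !![0, 0, 0; 0, 0, 0; 1, 0, 0] := by
  refine evolIso_of_natural_basis (P := !![0, b, c; 0, 0, 1; 1, 0, 0]) ?_ fun i j => ?_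
  · simp [det_fin_three, hb]
  · fin_cases i <;> fin_cases j <;> ext k <;> fin_cases k <;>
      simp [evolMul, Fin.sum_univ_three, vecMul, dotProduct]

theorem evolIso_proportional_rows (b m s r : ℝ) (hb : b ≠ 0) (hr : r ≠ 0) (hm : m = s * r ^ 2) :
    EvolIso !![0, b, 0; 0, 0, 0; 0, m * b, 0] !![0, 0, 0; 1, 0, 0; s, 0, 0] := by
  refine evolIso_of_natural_basis (P := !![0, b, 0; 1, 0, 0; 0, 0, r⁻¹]) ?_ fun i j => ?_
  · simp [det_fin_three, hb, hr]
  · have hsq : r⁻¹ * r⁻¹ * (m * b) = s * b := by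
      subst hm
      field_simp
    fin_cases i <;> fin_cases j <;> ext k <;> fin_cases k <;>
      simp [evolMul, Fin.sum_univ_three, vecMul, dotProduct, hsq]

theorem stmt (a b c l m : ℝ)
    (ha : a = 0) (hb : b ≠ 0) :
    (l = 0 ∧ m = 0 → EvolIso (!![a, b, c; l * a, l * b, l * c; m * a, m * b, m * c] : Matrix (Fin 3) (Fin 3) ℝ) (!![0, 0, 0; 0, 0, 0; 1, 0, 0] : Matrix (Fin 3) (Fin 3) ℝ)) ∧
    (l = 0 ∧ c = 0 ∧ m > 0 → EvolIso (!![a, b, c; l * a, l * b, l * c; m * a, m * b, m * c] : Matrix (Fin 3) (Fin 3) ℝ) (!![0, 0, 0; 1, 0, 0; 1, 0, 0] : Matrix (Fin 3) (Fin 3) ℝ)) ∧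
    (l = 0 ∧ c = 0 ∧ m < 0 → EvolIso (!![a, b, c; l * a, l * b, l * c; m * a, m * b, m * c] : Matrix (Fin 3) (Fin 3) ℝ) (!![0, 0, 0; 1, 0, 0; -1, 0, 0] : Matrix (Fin 3) (Fin 3) ℝ)) := by
  subst ha
  refine ⟨fun ⟨hl, hm⟩ => ?_, fun ⟨hl, hc, hm⟩ => ?_, fun ⟨hl, hc, hm⟩ => ?_⟩
  · subst hl hm
    simpa using evolIso_single_nonzero_row b c hb
  · subst hl hc
    simpa using evolIso_proportional_rows b m 1 √m hb (Real.sqrt_ne_zero'.2 hm)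
      (by rw [Real.sq_sqrt hm.le, one_mul])
  · subst hl hc
    have hm' : 0 < -m := neg_pos.2 hm
    simpa using evolIso_proportional_rows b m (-1) √(-m) hb (Real.sqrt_ne_zero'.2 hm')
      (by rw [Real.sq_sqrt hm'.le, neg_one_mul, neg_neg])
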